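/- arXiv:1702.01471 — 4 statements merged into one kernel-verified Lean document; each statement's English description precedes it below -/
import Mathlib

section
/- Let Λ ⊂ ℝ^d be open bounded convex with B(0, a₀) ⊂ Λ, and let l : Λ̄ → ℝ be convex with ∫_Λ |l(y)| dy ≤ M. Then sup_{y ∈ B̄(0, a₀/2)} |l(y)| is bounded by a constant depending only on d, a₀, Λ and M (local uniform boundedness of convex functions with bounded L¹ norm). -/
/-!
Averaging the convexity inequality `2 l(y) ≤ l(y + u) + l(y - u)` over `u ∈ B(0, r)` gives the
sub-mean-value property `|B(0, r)| l(y) ≤ ∫_{B(y, r)} l`, hence an upper bound `M / |B(0, r)|`.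
For the lower bound, `y/2 + u` is the midpoint of `y` and `2u`, so
`2 l(y/2 + u) ≤ l(y) + l(2u)`; averaging over `u ∈ B(0, ρ)` and using the upper bound at `2u`
bounds `l(y)` from below by `-2M / |B(0, ρ)|` minus that upper bound.
-/

open MeasureTheory Metric

theorem preimage_sub_left_ball {E : Type*} [SeminormedAddCommGroup E] (c : E) (r : ℝ) :
    (fun u => c - u) ⁻¹' ball c r = ball 0 r := by
  ext u
  simp [dist_eq_norm]

theorem abs_setIntegral_le_setIntegral_abs_of_subset {X : Type*} [MeasurableSpace X]
    {μ : Measure X} {f : X → ℝ} {s t : Set X} (hf : IntegrableOn f t μ) (hst : s ⊆ t) :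
    |∫ x in s, f x ∂μ| ≤ ∫ x in t, |f x| ∂μ :=
  calc |∫ x in s, f x ∂μ| ≤ ∫ x in s, |f x| ∂μ := abs_integral_le_integral_abs
    _ ≤ ∫ x in t, |f x| ∂μ :=
      setIntegral_mono_set hf.abs (.of_forall fun _ => abs_nonneg _) hst.eventuallyLE

theorem measureReal_ball_pos {X : Type*} [PseudoMetricSpace X] [ProperSpace X]
    [MeasurableSpace X] (μ : Measure X) [μ.IsOpenPosMeasure] [IsFiniteMeasureOnCompacts μ]
    (x : X) {r : ℝ} (hr : 0 < r) : 0 < μ.real (ball x r) :=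
  ENNReal.toReal_pos (measure_ball_pos μ x hr).ne' measure_ball_lt_top.ne

section Translation

variable {E F : Type*} [NormedAddCommGroup E] [MeasurableSpace E] [BorelSpace E]
  [NormedAddCommGroup F] (μ : Measure E) [μ.IsAddLeftInvariant]

theorem setIntegral_ball_zero_comp_add [NormedSpace ℝ F] (f : E → F) (c : E) (r : ℝ) :
    ∫ u in ball 0 r, f (c + u) ∂μ = ∫ x in ball c r, f x ∂μ := by
  have := (measurePreserving_add_left μ c).setIntegral_preimage_emb
    (measurableEmbedding_addLeft c) f (ball c r)
  rwa [preimage_add_ball, sub_self] at this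

theorem MeasureTheory.IntegrableOn.comp_add_ball_zero {f : E → F} {c : E} {r : ℝ}
    (hf : IntegrableOn f (ball c r) μ) : IntegrableOn (fun u => f (c + u)) (ball 0 r) μ := by
  rwa [← (measurePreserving_add_left μ c).integrableOn_comp_preimage
    (measurableEmbedding_addLeft c), preimage_add_ball, sub_self] at hf

variable [μ.IsNegInvariant]

theorem setIntegral_ball_zero_comp_sub [NormedSpace ℝ F] (f : E → F) (c : E) (r : ℝ) :
    ∫ u in ball 0 r, f (c - u) ∂μ = ∫ x in ball c r, f x ∂μ := by
  have := (Measure.measurePreserving_sub_left μ c).setIntegral_preimage_emb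
    (measurableEmbedding_subLeft c) f (ball c r)
  rwa [preimage_sub_left_ball] at this

theorem MeasureTheory.IntegrableOn.comp_sub_ball_zero {f : E → F} {c : E} {r : ℝ}
    (hf : IntegrableOn f (ball c r) μ) : IntegrableOn (fun u => f (c - u)) (ball 0 r) μ := by
  rwa [← (Measure.measurePreserving_sub_left μ c).integrableOn_comp_preimage
    (measurableEmbedding_subLeft c), preimage_sub_left_ball] at hf

end Translation

theorem ConvexOn.two_mul_map_half_smul_add_le {E : Type*} [AddCommGroup E] [Module ℝ E]
    {s : Set E} {f : E → ℝ} (hf : ConvexOn ℝ s f) {x y : E} (hx : x ∈ s) (hy : y ∈ s) :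
    2 * f ((2 : ℝ)⁻¹ • (x + y)) ≤ f x + f y := by
  have h := hf.2 hx hy (by norm_num : (0 : ℝ) ≤ 2⁻¹) (by norm_num : (0 : ℝ) ≤ 2⁻¹)
    (by norm_num)
  rw [← smul_add, smul_eq_mul, smul_eq_mul] at h
  linarith

section ConvexBall

variable {E : Type*} [NormedAddCommGroup E] [NormedSpace ℝ E] [FiniteDimensional ℝ E]
  [MeasurableSpace E] [BorelSpace E] (μ : Measure E) [μ.IsAddHaarMeasure]
  {s : Set E} {f : E → ℝ}

theorem ConvexOn.measureReal_ball_mul_le_setIntegral (hf : ConvexOn ℝ s f) {y : E} {r : ℝ}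
    (hs : ball y r ⊆ s) (hint : IntegrableOn f (ball y r) μ) :
    μ.real (ball 0 r) * f y ≤ ∫ x in ball y r, f x ∂μ := by
  have hmid : ∀ u ∈ ball (0 : E) r, 2 * f y ≤ f (y + u) + f (y - u) := by
    intro u hu
    have hu' : ‖u‖ < r := mem_ball_zero_iff.1 hu
    have hplus : y + u ∈ ball y r := by rwa [mem_ball, dist_eq_norm, add_sub_cancel_left]
    have hminus : y - u ∈ ball y r := by
      rwa [mem_ball, dist_eq_norm, sub_sub_cancel_left, norm_neg]
    have hy : (2 : ℝ)⁻¹ • ((y + u) + (y - u)) = y := by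
      rw [add_add_sub_cancel, ← two_smul ℝ y, smul_smul, inv_mul_cancel₀ two_ne_zero,
        one_smul]
    simpa only [hy] using hf.two_mul_map_half_smul_add_le (hs hplus) (hs hminus)
  have hplus := hint.comp_add_ball_zero μ
  have hminus := hint.comp_sub_ball_zero μ
  have hmono :
      ∫ _ in ball (0 : E) r, 2 * f y ∂μ ≤ ∫ u in ball 0 r, (f (y + u) + f (y - u)) ∂μ :=
    setIntegral_mono_on (integrableOn_const measure_ball_lt_top.ne) (hplus.add hminus)
      measurableSet_ball hmid
  rw [setIntegral_const, integral_add hplus hminus, setIntegral_ball_zero_comp_add,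
    setIntegral_ball_zero_comp_sub, smul_eq_mul] at hmono
  linarith

theorem ConvexOn.two_mul_setIntegral_ball_half_le (hf : ConvexOn ℝ s f) {y : E} {ρ U : ℝ}
    (hy : y ∈ s) (hs : ball 0 (2 * ρ) ⊆ s) (hU : ∀ x ∈ ball (0 : E) (2 * ρ), f x ≤ U)
    (hint : IntegrableOn f (ball ((2 : ℝ)⁻¹ • y) ρ) μ) :
    2 * ∫ x in ball ((2 : ℝ)⁻¹ • y) ρ, f x ∂μ ≤ μ.real (ball 0 ρ) * (f y + U) := by
  have hmid : ∀ u ∈ ball (0 : E) ρ, 2 * f ((2 : ℝ)⁻¹ • y + u) ≤ f y + U := by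
    intro u hu
    have hu' : (2 : ℝ) • u ∈ ball (0 : E) (2 * ρ) := by
      rw [mem_ball_zero_iff, norm_smul, Real.norm_two]
      linarith [mem_ball_zero_iff.1 hu]
    have hz : (2 : ℝ)⁻¹ • (y + (2 : ℝ) • u) = (2 : ℝ)⁻¹ • y + u := by
      rw [smul_add, smul_smul, inv_mul_cancel₀ two_ne_zero, one_smul]
    have h := hf.two_mul_map_half_smul_add_le hy (hs hu')
    rw [hz] at h
    linarith [hU _ hu']
  have hmono := setIntegral_mono_on ((hint.comp_add_ball_zero μ).const_mul 2)
    (integrableOn_const measure_ball_lt_top.ne) measurableSet_ball hmid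
  rwa [integral_const_mul, setIntegral_ball_zero_comp_add, setIntegral_const, smul_eq_mul]
    at hmono

variable {R M : ℝ}

theorem ConvexOn.le_div_measureReal_ball_of_setIntegral_abs_le (hf : ConvexOn ℝ (ball 0 R) f)
    (hint : IntegrableOn f (ball 0 R) μ) (hM : ∫ x in ball 0 R, |f x| ∂μ ≤ M) (hR : 0 < R)
    {x : E}
    (hx : x ∈ closedBall 0 (R / 2)) : f x ≤ M / μ.real (ball 0 (R / 2)) := by
  have hsub : ball x (R / 2) ⊆ ball 0 R := ball_subset_ball' (by linarith [mem_closedBall.1 hx])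
  rw [le_div_iff₀' (measureReal_ball_pos μ 0 (by positivity))]
  calc μ.real (ball 0 (R / 2)) * f x ≤ ∫ y in ball x (R / 2), f y ∂μ :=
        hf.measureReal_ball_mul_le_setIntegral μ hsub (hint.mono_set hsub)
    _ ≤ M := (le_abs_self _).trans
        ((abs_setIntegral_le_setIntegral_abs_of_subset hint hsub).trans hM)

theorem ConvexOn.neg_le_of_setIntegral_abs_le (hf : ConvexOn ℝ (ball 0 R) f)
    (hint : IntegrableOn f (ball 0 R) μ) (hM : ∫ x in ball 0 R, |f x| ∂μ ≤ M) (hR : 0 < R)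
    {x : E}
    (hx : x ∈ closedBall 0 (R / 2)) :
    -(M / μ.real (ball 0 (R / 2)) + 2 * M / μ.real (ball 0 (R / 4))) ≤ f x := by
  have hsub : ball ((2 : ℝ)⁻¹ • x) (R / 4) ⊆ ball 0 R := by
    refine ball_subset_ball' ?_
    rw [dist_zero_right, norm_smul, norm_inv, Real.norm_two]
    linarith [mem_closedBall_zero_iff.1 hx]
  have hU : ∀ z ∈ ball (0 : E) (2 * (R / 4)), f z ≤ M / μ.real (ball 0 (R / 2)) :=
    fun z hz => hf.le_div_measureReal_ball_of_setIntegral_abs_le μ hint hM hR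
      (ball_subset_closedBall.trans (closedBall_subset_closedBall (by linarith)) hz)
  have hlow : 2 * -M ≤ μ.real (ball 0 (R / 4)) * (f x + M / μ.real (ball 0 (R / 2))) :=
    calc 2 * -M ≤ 2 * ∫ y in ball ((2 : ℝ)⁻¹ • x) (R / 4), f y ∂μ := by
          linarith [neg_le_of_abs_le
            ((abs_setIntegral_le_setIntegral_abs_of_subset hint hsub).trans hM)]
      _ ≤ _ := hf.two_mul_setIntegral_ball_half_le μ
          (closedBall_subset_ball (by linarith) hx) (ball_subset_ball (by linarith)) hU
          (hint.mono_set hsub)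
  rw [← div_le_iff₀' (measureReal_ball_pos μ 0 (by positivity)), mul_neg, neg_div] at hlow
  linarith

end ConvexBall

theorem statement_11_general {d : ℕ} (a₀ M : ℝ) (ha₀ : 0 < a₀)
    (Λ : Set (EuclideanSpace ℝ (Fin d)))
    (hball : Metric.ball 0 a₀ ⊆ Λ) :
    ∃ C : ℝ, ∀ l : EuclideanSpace ℝ (Fin d) → ℝ,
      ConvexOn ℝ (closure Λ) l →
      IntegrableOn l Λ volume →
      (∫ y in Λ, |l y| ∂volume) ≤ M →
      ∀ y ∈ Metric.closedBall (0 : EuclideanSpace ℝ (Fin d)) (a₀ / 2), |l y| ≤ C := by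
  set V := volume.real (ball (0 : EuclideanSpace ℝ (Fin d)) (a₀ / 2))
  set W := volume.real (ball (0 : EuclideanSpace ℝ (Fin d)) (a₀ / 4))
  refine ⟨M / V + 2 * M / W, fun l hl hint hM y hy => ?_⟩
  have hconv : ConvexOn ℝ (ball 0 a₀) l :=
    hl.subset (hball.trans subset_closure) (convex_ball 0 a₀)
  have hint' : IntegrableOn l (ball 0 a₀) := hint.mono_set hball
  have hM' : ∫ x in ball 0 a₀, |l x| ≤ M :=
    (setIntegral_mono_set hint.abs (.of_forall fun _ => abs_nonneg _) hball.eventuallyLE).trans hM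
  have hW : 0 ≤ 2 * M / W :=
    div_nonneg (mul_nonneg zero_le_two ((integral_nonneg fun _ => abs_nonneg _).trans hM))
      (measureReal_ball_pos volume 0 (by positivity)).le
  rw [abs_le]
  exact ⟨hconv.neg_le_of_setIntegral_abs_le volume hint' hM' ha₀ hy,
    (hconv.le_div_measureReal_ball_of_setIntegral_abs_le volume hint' hM' ha₀ hy).trans
      (le_add_of_nonneg_right hW)⟩

/-- local uniform boundedness of convex functions with bounded
`L¹` norm: if `Λ ⊂ ℝ^d` is open bounded convex with `B(0,a₀) ⊆ Λ`, there is a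
constant `C` (depending only on `d, a₀, Λ, M`) bounding `|l|` on
`B̄(0, a₀/2)` for every convex `l : Λ̄ → ℝ` with `∫_Λ |l| ≤ M`. -/
theorem statement_11 {d : ℕ} (a₀ M : ℝ) (ha₀ : 0 < a₀)
    (Λ : Set (EuclideanSpace ℝ (Fin d))) (hΛo : IsOpen Λ)
    (hΛb : Bornology.IsBounded Λ) (hΛc : Convex ℝ Λ)
    (hball : Metric.ball 0 a₀ ⊆ Λ) :
    ∃ C : ℝ, ∀ l : EuclideanSpace ℝ (Fin d) → ℝ,
      ConvexOn ℝ (closure Λ) l →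
      IntegrableOn l Λ volume →
      (∫ y in Λ, |l y| ∂volume) ≤ M →
      ∀ y ∈ Metric.closedBall (0 : EuclideanSpace ℝ (Fin d)) (a₀ / 2), |l y| ≤ C :=
  statement_11_general a₀ M ha₀ Λ hball
end

section
/- Let k : ℝ^d → ℝ be convex and differentiable at v ∈ ℝ^d, and suppose k(v) = sup_{u ∈ Λ̄, t>0} (u·v − t·l(u) − H(t)) where Λ̄ is compact, l : Λ̄ → ℝ is lower semicontinuous and bounded below, and H satisfies (A2), and suppose the supremum is attained. Then the maximizing pair (u₀, t₀) is unique, and is characterized by u₀ = ∇k(v) and H'(t₀) + l(u₀) = 0. -/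
open Filter
open scoped RealInnerProductSpace

/-! If `(u, t)` attains the supremum defining `k(v)`, then `w ↦ ⟪u, w⟫ - t l(u) - H(t)` is an
affine minorant of `k` touching it at `v`, so `u = ∇k(v)`; and `s ↦ s l(u) + H(s)` is minimized
on `(0, ∞)` at `t`, so `H'(t) + l(u) = 0`. Since this function is strictly convex, its minimizer
`t` is unique once `u = ∇k(v)` is fixed. -/

theorem HasGradientAt.eq_of_isLocalMin_sub_inner {E : Type*} [NormedAddCommGroup E]
    [InnerProductSpace ℝ E] [CompleteSpace E] {k : E → ℝ} {g u v : E}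
    (hk : HasGradientAt k g v) (hmin : IsLocalMin (fun w => k w - ⟪u, w⟫) v) : u = g := by
  have hzero := hmin.hasFDerivAt_eq_zero (hk.hasFDerivAt.sub (innerSL ℝ u).hasFDerivAt)
  refine ext_inner_right ℝ fun w => ?_
  simpa [sub_eq_zero, eq_comm] using congrArg (· w) hzero

theorem IsLocalMin.hasDerivAt_add_mul_eq_zero {H : ℝ → ℝ} {h a t : ℝ}
    (hmin : IsLocalMin (fun s => s * a + H s) t) (hH : HasDerivAt H h t) : h + a = 0 := by
  have := hmin.hasDerivAt_eq_zero (((hasDerivAt_id t).mul_const a).add hH)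
  linarith

theorem StrictConvexOn.mul_add {s : Set ℝ} {H : ℝ → ℝ} (hH : StrictConvexOn ℝ s H) (a : ℝ) :
    StrictConvexOn ℝ s (fun x => x * a + H x) :=
  (((LinearMap.mul ℝ ℝ).flip a).convexOn hH.1).add_strictConvexOn hH

theorem statement_12_general {d : ℕ} (Λc : Set (EuclideanSpace ℝ (Fin d)))
    (l : EuclideanSpace ℝ (Fin d) → ℝ)
    (H H' : ℝ → ℝ)
    (hderiv : ∀ t ∈ Set.Ioi (0 : ℝ), HasDerivAt H (H' t) t)
    (hconv : StrictConvexOn ℝ (Set.Ioi 0) H)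
    (k : EuclideanSpace ℝ (Fin d) → ℝ)
    (hk : ∀ w, IsLUB
      {y | ∃ u ∈ Λc, ∃ t > (0 : ℝ), y = ⟪u, w⟫ - t * l u - H t} (k w))
    (v g : EuclideanSpace ℝ (Fin d)) (hgrad : HasGradientAt k g v) :
    (∀ u ∈ Λc, ∀ t > (0 : ℝ), k v = ⟪u, v⟫ - t * l u - H t →
      u = g ∧ H' t + l u = 0) ∧
    (∀ u₁ ∈ Λc, ∀ u₂ ∈ Λc, ∀ t₁ > (0 : ℝ), ∀ t₂ > (0 : ℝ),
      k v = ⟪u₁, v⟫ - t₁ * l u₁ - H t₁ →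
      k v = ⟪u₂, v⟫ - t₂ * l u₂ - H t₂ → u₁ = u₂ ∧ t₁ = t₂) := by
  have hle : ∀ u ∈ Λc, ∀ s > (0 : ℝ), ∀ w, ⟪u, w⟫ - s * l u - H s ≤ k w :=
    fun u hu s hs w => (hk w).1 ⟨u, hu, s, hs, rfl⟩
  have hminOn : ∀ u ∈ Λc, ∀ t > (0 : ℝ), k v = ⟪u, v⟫ - t * l u - H t →
      IsMinOn (fun s => s * l u + H s) (Set.Ioi 0) t := fun u hu t _ heq =>
    isMinOn_iff.2 fun s hs => by linarith [hle u hu s hs v]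
  have first_order : ∀ u ∈ Λc, ∀ t > (0 : ℝ), k v = ⟪u, v⟫ - t * l u - H t →
      u = g ∧ H' t + l u = 0 := by
    intro u hu t ht heq
    have hmin : IsLocalMin (fun w => k w - ⟪u, w⟫) v :=
      Eventually.of_forall fun w => by linarith [hle u hu t ht w]
    exact ⟨hgrad.eq_of_isLocalMin_sub_inner hmin,
      ((hminOn u hu t ht heq).isLocalMin (Ioi_mem_nhds ht)).hasDerivAt_add_mul_eq_zero
        (hderiv t ht)⟩
  refine ⟨first_order, fun u₁ hu₁ u₂ hu₂ t₁ ht₁ t₂ ht₂ heq₁ heq₂ => ?_⟩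
  obtain rfl : u₁ = u₂ :=
    (first_order u₁ hu₁ t₁ ht₁ heq₁).1.trans (first_order u₂ hu₂ t₂ ht₂ heq₂).1.symm
  exact ⟨rfl, (hconv.mul_add (l u₁)).eq_of_isMinOn (hminOn u₁ hu₁ t₁ ht₁ heq₁)
    (hminOn u₁ hu₂ t₂ ht₂ heq₂) ht₁ ht₂⟩

/-- let `k` be convex, differentiable at `v` with gradient `g`,
equal to the transform `k(w) = sup_{u ∈ Λ̄, t>0}(u·w − t l(u) − H(t))`, with
`Λ̄` compact, `l` lsc and bounded below on `Λ̄`, `H` satisfying (A2), and the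
supremum at `v` attained. Then every maximizing pair `(u,t)` satisfies
`u = ∇k(v)` and `H'(t) + l(u) = 0`; in particular the maximizing pair is
unique. -/
theorem statement_12 {d : ℕ} (Λc : Set (EuclideanSpace ℝ (Fin d)))
    (hne : Λc.Nonempty) (hcomp : IsCompact Λc)
    (l : EuclideanSpace ℝ (Fin d) → ℝ)
    (hlsc : LowerSemicontinuousOn l Λc)
    (m : ℝ) (hm : ∀ u ∈ Λc, m ≤ l u)
    (H H' : ℝ → ℝ)
    (hderiv : ∀ t ∈ Set.Ioi (0 : ℝ), HasDerivAt H (H' t) t)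
    (hderivCont : ContinuousOn H' (Set.Ioi 0))
    (hconv : StrictConvexOn ℝ (Set.Ioi 0) H)
    (hlim1 : Tendsto H (nhdsWithin 0 (Set.Ioi 0)) atTop)
    (hlim2 : Tendsto (fun t => H t / t) atTop atTop)
    (k : EuclideanSpace ℝ (Fin d) → ℝ)
    (hkconv : ConvexOn ℝ Set.univ k)
    (hk : ∀ w, IsLUB
      {y | ∃ u ∈ Λc, ∃ t > (0 : ℝ), y = ⟪u, w⟫ - t * l u - H t} (k w))
    (v g : EuclideanSpace ℝ (Fin d)) (hgrad : HasGradientAt k g v)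
    (hattain : ∃ u ∈ Λc, ∃ t > (0 : ℝ), k v = ⟪u, v⟫ - t * l u - H t) :
    (∀ u ∈ Λc, ∀ t > (0 : ℝ), k v = ⟪u, v⟫ - t * l u - H t →
      u = g ∧ H' t + l u = 0) ∧
    (∀ u₁ ∈ Λc, ∀ u₂ ∈ Λc, ∀ t₁ > (0 : ℝ), ∀ t₂ > (0 : ℝ),
      k v = ⟪u₁, v⟫ - t₁ * l u₁ - H t₁ →
      k v = ⟪u₂, v⟫ - t₂ * l u₂ - H t₂ → u₁ = u₂ ∧ t₁ = t₂) :=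
  statement_12_general Λc l H H' hderiv hconv k hk v g hgrad
end

section
/- Let Ω ⊂ ℝ^d be open and ψ : ℝ^d → ℝ convex and twice differentiable with ∇²ψ(x) positive definite for a.e. x ∈ Ω. Then the gradient map ∇ψ : Ω → ℝ^d is non-degenerate: for any Lebesgue-null set N ⊂ ℝ^d, the preimage (∇ψ)^{-1}(N) ∩ Ω is Lebesgue-null. -/
open MeasureTheory

section Aux

variable {d : ℕ}

local notation "Euc" => EuclideanSpace ℝ (Fin d)

/-- The inverse of `toDual`, as a genuinely `ℝ`-linear isometry equivalence. -/
noncomputable def dualEquiv : StrongDual ℝ Euc ≃ₗᵢ[ℝ] Euc :=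
  (InnerProductSpace.toDual ℝ Euc).symm

lemma dualEquiv_inner (φ : StrongDual ℝ Euc) (w : Euc) :
    (inner ℝ (dualEquiv φ) w : ℝ) = φ w :=
  InnerProductSpace.toDual_symm_apply

/-- The second derivative bilinear form agrees with the derivative of the gradient. -/
lemma inner_fderiv_gradient {ψ : Euc → ℝ} (hψ : ContDiff ℝ 2 ψ)
    (x v w : Euc) :
    (inner ℝ (fderiv ℝ (gradient ψ) x v) w : ℝ) = iteratedFDeriv ℝ 2 ψ x ![v, w] := by
  have hg : gradient ψ = fun y => dualEquiv (fderiv ℝ ψ y) := rfl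
  rw [iteratedFDeriv_two_apply]
  have h : fderiv ℝ (gradient ψ) x
      = ((dualEquiv : StrongDual ℝ Euc ≃ₗᵢ[ℝ] Euc)
          : StrongDual ℝ Euc →L[ℝ] Euc).comp
        (fderiv ℝ (fderiv ℝ ψ) x) := by
    rw [hg]
    exact (dualEquiv : StrongDual ℝ Euc ≃ₗᵢ[ℝ] Euc).comp_fderiv
  rw [h]
  simp only [ContinuousLinearMap.coe_comp', Function.comp_apply,
    LinearIsometryEquiv.coe_coe]
  exact dualEquiv_inner _ _

lemma contDiff_gradient {ψ : Euc → ℝ} (hψ : ContDiff ℝ 2 ψ) :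
    ContDiff ℝ 1 (gradient ψ) := by
  have h2 : ContDiff ℝ 1 (fderiv ℝ ψ) := hψ.fderiv_right (by norm_num)
  exact ((dualEquiv : StrongDual ℝ Euc ≃ₗᵢ[ℝ] Euc).contDiff).comp h2

lemma det_fderiv_gradient_ne_zero {ψ : Euc → ℝ} (hψ : ContDiff ℝ 2 ψ) {x : Euc}
    (hx : ∀ v : Euc, v ≠ 0 → 0 < iteratedFDeriv ℝ 2 ψ x ![v, v]) :
    (fderiv ℝ (gradient ψ) x).det ≠ 0 := by
  intro h0
  obtain ⟨v, hvmem, hv⟩ := Submodule.exists_mem_ne_zero_of_ne_bot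
    (bot_lt_iff_ne_bot.1 (LinearMap.bot_lt_ker_of_det_eq_zero h0))
  have hv0 : (fderiv ℝ (gradient ψ) x) v = 0 := hvmem
  have h1 : iteratedFDeriv ℝ 2 ψ x ![v, v] = 0 := by
    rw [← inner_fderiv_gradient hψ x v v, hv0, inner_zero_left]
  exact absurd h1 (ne_of_gt (hx v hv))

end Aux

/-- if `ψ : ℝ^d → ℝ` is convex and twice (continuously)
differentiable with a.e. positive definite Hessian on an open set `Ω`, then
the gradient map `∇ψ` is non-degenerate on `Ω`: preimages of Lebesgue-null
sets are Lebesgue-null. -/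
theorem statement_17 {d : ℕ}
    (Ω : Set (EuclideanSpace ℝ (Fin d))) (hΩ : IsOpen Ω)
    (ψ : EuclideanSpace ℝ (Fin d) → ℝ)
    (hψconv : ConvexOn ℝ Set.univ ψ)
    (hψ : ContDiff ℝ 2 ψ)
    (hpos : ∀ᵐ x ∂(volume.restrict Ω),
      ∀ v : EuclideanSpace ℝ (Fin d), v ≠ 0 →
        0 < iteratedFDeriv ℝ 2 ψ x ![v, v]) :
    ∀ N : Set (EuclideanSpace ℝ (Fin d)), volume N = 0 →
      volume ((gradient ψ) ⁻¹' N ∩ Ω) = 0 := by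
  classical
  intro N hN
  set f := gradient ψ with hf_def
  have hf1 : ContDiff ℝ 1 f := contDiff_gradient hψ
  have hfc : Continuous f := hf1.continuous
  have hfd : Differentiable ℝ f := hf1.differentiable one_ne_zero
  have hDcont : Continuous fun x => (fderiv ℝ f x).det :=
    ContinuousLinearMap.continuous_det.comp (hf1.continuous_fderiv one_ne_zero)
  obtain ⟨N', hNN', hN'meas, hN'⟩ := exists_measurable_superset_of_null hN
  set B : Set (EuclideanSpace ℝ (Fin d)) :=
    f ⁻¹' N' ∩ Ω ∩ {x | (fderiv ℝ f x).det ≠ 0} with hB_def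
  have hBmeas : MeasurableSet B :=
    ((hN'meas.preimage hfc.measurable).inter hΩ.measurableSet).inter
      ((hDcont.measurable (measurableSet_singleton (0 : ℝ))).compl)
  -- the degenerate part of Ω is null
  have hbad : volume (Ω ∩ {x | (fderiv ℝ f x).det = 0}) = 0 := by
    have h1 : ∀ᵐ x ∂volume, x ∈ Ω →
        ∀ v : EuclideanSpace ℝ (Fin d), v ≠ 0 →
          0 < iteratedFDeriv ℝ 2 ψ x ![v, v] :=
      (ae_restrict_iff' hΩ.measurableSet).mp hpos
    have h2 : ∀ᵐ x ∂volume, x ∈ Ω → (fderiv ℝ f x).det ≠ 0 :=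
      h1.mono fun x hx hxΩ => det_fderiv_gradient_ne_zero hψ (hx hxΩ)
    refine measure_mono_null (fun x hx => ?_) (ae_iff.mp h2)
    simp only [Set.mem_setOf_eq, not_forall]
    exact ⟨hx.1, fun h => h hx.2⟩
  -- local injectivity around points of B
  have hloc : ∀ x ∈ B, ∃ U : Set (EuclideanSpace ℝ (Fin d)),
      IsOpen U ∧ U ∈ nhds x ∧ Set.InjOn f U := by
    intro x hx
    have hdet : (fderiv ℝ f x).det ≠ 0 := hx.2
    let e := (LinearMap.equivOfDetNeZero
      ((fderiv ℝ f x) : EuclideanSpace ℝ (Fin d) →ₗ[ℝ] EuclideanSpace ℝ (Fin d))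
      hdet).toContinuousLinearEquiv
    have he : (e : EuclideanSpace ℝ (Fin d) →L[ℝ] EuclideanSpace ℝ (Fin d))
        = fderiv ℝ f x := by
      ext v
      simp [e]
    have hstrict : HasStrictFDerivAt f
        (e : EuclideanSpace ℝ (Fin d) →L[ℝ] EuclideanSpace ℝ (Fin d)) x := by
      rw [he]
      exact (hf1.contDiffAt).hasStrictFDerivAt one_ne_zero
    refine ⟨(hstrict.toOpenPartialHomeomorph f).source,
      (hstrict.toOpenPartialHomeomorph f).open_source,
      (hstrict.toOpenPartialHomeomorph f).open_source.mem_nhds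
        hstrict.mem_toOpenPartialHomeomorph_source, ?_⟩
    have hi := (hstrict.toOpenPartialHomeomorph f).injOn
    rwa [hstrict.toOpenPartialHomeomorph_coe] at hi
  choose U hUopen hUnhds hUinj using hloc
  -- B is null
  have hB : volume B = 0 := by
    obtain ⟨t, hts, htc, htcov⟩ := TopologicalSpace.countable_cover_nhdsWithin
      (f := fun x => if hx : x ∈ B then U x hx else ∅) (s := B)
      (fun x hx => by
        simp only [dif_pos hx]
        exact mem_nhdsWithin_of_mem_nhds (hUnhds x hx))
    have hcov2 : B ⊆ ⋃ x ∈ t, B ∩ (if hx : x ∈ B then U x hx else ∅) := by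
      intro y hy
      obtain ⟨x, hxt, hy2⟩ := Set.mem_iUnion₂.mp (htcov hy)
      refine Set.mem_iUnion₂.mpr ?_
      exact ⟨x, hxt, hy, hy2⟩
    refine measure_mono_null hcov2 ?_
    rw [measure_biUnion_null_iff htc]
    intro x hxt
    have hxB : x ∈ B := hts hxt
    simp only [dif_pos hxB]
    set s' : Set (EuclideanSpace ℝ (Fin d)) := B ∩ U x hxB with hs'_def
    have hs'meas : MeasurableSet s' := hBmeas.inter (hUopen x hxB).measurableSet
    have hf' : ∀ y ∈ s', HasFDerivWithinAt f (fderiv ℝ f y) s' y :=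
      fun y _ => (hfd y).hasFDerivAt.hasFDerivWithinAt
    have hinj : Set.InjOn f s' := (hUinj x hxB).mono Set.inter_subset_right
    have key := lintegral_abs_det_fderiv_le_addHaar_image volume hs'meas hf' hinj
    have himg : volume (f '' s') = 0 := by
      refine measure_mono_null ?_ hN'
      rintro _ ⟨y, hy, rfl⟩
      exact hy.1.1.1
    have hzero : (∫⁻ y in s', ENNReal.ofReal |(fderiv ℝ f y).det| ∂volume) = 0 :=
      le_antisymm (himg ▸ key) zero_le
    have hmeasint : Measurable fun y => ENNReal.ofReal |(fderiv ℝ f y).det| :=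
      ENNReal.measurable_ofReal.comp hDcont.abs.measurable
    have hae : ∀ᵐ y ∂volume, y ∈ s' → ENNReal.ofReal |(fderiv ℝ f y).det| = 0 :=
      (setLIntegral_eq_zero_iff hs'meas hmeasint).mp hzero
    rw [measure_eq_zero_iff_ae_notMem]
    filter_upwards [hae] with y hy hys'
    have h0 := hy hys'
    have hdet : (fderiv ℝ f y).det ≠ 0 := hys'.1.2
    rw [ENNReal.ofReal_eq_zero] at h0
    exact hdet (abs_eq_zero.mp (le_antisymm h0 (abs_nonneg _)))
  have hsub : f ⁻¹' N ∩ Ω ⊆ B ∪ (Ω ∩ {x | (fderiv ℝ f x).det = 0}) := by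
    intro x hx
    by_cases hdet : (fderiv ℝ f x).det = 0
    · exact Or.inr ⟨hx.2, hdet⟩
    · exact Or.inl ⟨⟨hNN' hx.1, hx.2⟩, hdet⟩
  exact measure_mono_null hsub (measure_union_null hB hbad)
end

section
/- Let Ω, Λ ⊂ ℝ^d be bounded, F ∈ L¹(Ω, ℝ^d), φ ∈ W₀^{1,q}(Ω, ℝ^{d×d}), H satisfying (A2), and (k, l) with l : Λ̄ → ℝ attaining its infimum at u_l ∈ Λ̄ with s_l := −l(u_l), and k = l^# (i.e., k(v) = sup_{u,t>0}(u·v − t l(u) − H(t))). Then ∫_Ω k(F + div φ) dx ≥ L^d(Ω) H*(s_l) − r* ‖F‖_{L¹(Ω)}, where r* bounds sup_{u∈Λ̄}|u| and H* is the Legendre transform of H. -/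
/-!
Testing the supremum defining `k = l^#` at the single point `u_l` gives the affine minorant
`k(v) ≥ H*(s_l) + ⟪u_l, v⟫`. Integrating over `Ω`, the divergence term disappears because `u_l`
is constant, and `|⟪u_l, F⟫| ≤ r* ‖F‖` since `u_l ∈ Λ̄ ⊆ B̄(0, r*)`.
-/

open MeasureTheory Filter
open scoped RealInnerProductSpace

variable {E : Type*} [NormedAddCommGroup E] [InnerProductSpace ℝ E]

theorem add_inner_le_of_mem_upperBounds {Λ : Set E} {l : E → ℝ} {H : ℝ → ℝ} {Hstar k : ℝ}
    {u v : E} (hu : u ∈ Λ)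
    (hHstar : IsLUB {y | ∃ t > (0 : ℝ), y = -l u * t - H t} Hstar)
    (hk : k ∈ upperBounds {y | ∃ u ∈ Λ, ∃ t > (0 : ℝ), y = ⟪u, v⟫ - t * l u - H t}) :
    Hstar + ⟪u, v⟫ ≤ k := by
  suffices Hstar ≤ k - ⟪u, v⟫ by linarith
  refine hHstar.2 ?_
  rintro _ ⟨t, ht, rfl⟩
  have := hk ⟨u, hu, t, ht, rfl⟩
  linarith

section Integral

variable {α : Type*} [MeasurableSpace α] {μ : Measure α}

theorem neg_mul_integral_norm_le_integral_inner {u : E} {r : ℝ} (hu : ‖u‖ ≤ r) {F : α → E}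
    (hF : Integrable F μ) : -(r * ∫ x, ‖F x‖ ∂μ) ≤ ∫ x, ⟪u, F x⟫ ∂μ := by
  rw [← integral_const_mul, ← integral_neg]
  refine integral_mono (hF.norm.const_mul r).neg (hF.const_inner u) fun x => ?_
  have hle : ‖u‖ * ‖F x‖ ≤ r * ‖F x‖ := mul_le_mul_of_nonneg_right hu (norm_nonneg _)
  linarith [neg_le_of_abs_le (abs_real_inner_le_norm u (F x))]

theorem integral_const_add_inner_add_of_integral_inner_eq_zero [IsFiniteMeasure μ] (c : ℝ)
    (u : E) {F G : α → E} (hF : Integrable F μ) (hG : Integrable G μ)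
    (hG0 : ∫ x, ⟪u, G x⟫ ∂μ = 0) :
    ∫ x, (c + ⟪u, F x + G x⟫) ∂μ = μ.real Set.univ * c + ∫ x, ⟪u, F x⟫ ∂μ := by
  have hFG : Integrable (fun x => ⟪u, F x⟫ + ⟪u, G x⟫) μ :=
    (hF.const_inner u).add (hG.const_inner u)
  simp only [inner_add_right]
  rw [integral_add (integrable_const c) hFG, integral_add (hF.const_inner u) (hG.const_inner u), hG0, add_zero, integral_const,
    smul_eq_mul]

end Integral

theorem statement_18_general {d : ℕ}
    (Ω Λ : Set (EuclideanSpace ℝ (Fin d)))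
    (hΩb : Bornology.IsBounded Ω)
    (rstar : ℝ) (hr : ∀ u ∈ closure Λ, ‖u‖ ≤ rstar)
    (F Divφ : EuclideanSpace ℝ (Fin d) → EuclideanSpace ℝ (Fin d))
    (hF : IntegrableOn F Ω volume) (hDivφ : IntegrableOn Divφ Ω volume)
    (hdiv0 : ∀ w : EuclideanSpace ℝ (Fin d), (∫ x in Ω, ⟪w, Divφ x⟫) = 0)
    (H Hstar : ℝ → ℝ)
    (hHstar : ∀ s : ℝ, IsLUB {y | ∃ t > (0 : ℝ), y = s * t - H t} (Hstar s))
    (l : EuclideanSpace ℝ (Fin d) → ℝ)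
    (ul : EuclideanSpace ℝ (Fin d)) (hul : ul ∈ closure Λ)
    (sl : ℝ) (hsl : sl = -l ul)
    (k : EuclideanSpace ℝ (Fin d) → ℝ)
    (hk : ∀ v, IsLUB
      {y | ∃ u ∈ closure Λ, ∃ t > (0 : ℝ), y = ⟪u, v⟫ - t * l u - H t} (k v))
    (hkint : IntegrableOn (fun x => k (F x + Divφ x)) Ω volume) :
    (volume Ω).toReal * Hstar sl - rstar * ∫ x in Ω, ‖F x‖
      ≤ ∫ x in Ω, k (F x + Divφ x) := by
  subst hsl
  have : IsFiniteMeasure (volume.restrict Ω) := ⟨by simpa using hΩb.measure_lt_top⟩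
  have hlow : Integrable (fun x => Hstar (-l ul) + ⟪ul, F x + Divφ x⟫) (volume.restrict Ω) :=
    (integrable_const _).add ((hF.add hDivφ).const_inner ul)
  calc (volume Ω).toReal * Hstar (-l ul) - rstar * ∫ x in Ω, ‖F x‖
      ≤ (volume Ω).toReal * Hstar (-l ul) + ∫ x in Ω, ⟪ul, F x⟫ := by
        linarith [neg_mul_integral_norm_le_integral_inner (hr ul hul) hF]
    _ = ∫ x in Ω, (Hstar (-l ul) + ⟪ul, F x + Divφ x⟫) := by
        rw [integral_const_add_inner_add_of_integral_inner_eq_zero _ ul hF hDivφ (hdiv0 ul),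
          measureReal_restrict_apply_univ, Measure.real]
    _ ≤ ∫ x in Ω, k (F x + Divφ x) :=
        integral_mono hlow hkint fun x =>
          add_inner_le_of_mem_upperBounds hul (hHstar _) (hk _).1

/-- with `l` attaining its infimum over `Λ̄` at `u_l`,
`s_l = −l(u_l)`, `k = l^#`, `H` satisfying (A2) with Legendre transform `H*`,
`Λ̄ ⊆ B̄(0, r*)`, `F` integrable on `Ω`, and `φ ∈ W₀^{1,q}` (so that the
integral of `div φ` against any constant vector vanishes), one has
`∫_Ω k(F + div φ) ≥ L^d(Ω) H*(s_l) − r* ‖F‖_{L¹(Ω)}`. -/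
theorem statement_18 {d : ℕ}
    (Ω Λ : Set (EuclideanSpace ℝ (Fin d)))
    (hΩm : MeasurableSet Ω) (hΩb : Bornology.IsBounded Ω)
    (hΛb : Bornology.IsBounded Λ) (hΛne : Λ.Nonempty)
    (rstar : ℝ) (hr0 : 0 ≤ rstar) (hr : ∀ u ∈ closure Λ, ‖u‖ ≤ rstar)
    (F Divφ : EuclideanSpace ℝ (Fin d) → EuclideanSpace ℝ (Fin d))
    (hF : IntegrableOn F Ω volume) (hDivφ : IntegrableOn Divφ Ω volume)
    (hdiv0 : ∀ w : EuclideanSpace ℝ (Fin d), (∫ x in Ω, ⟪w, Divφ x⟫) = 0)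
    (H H' Hstar : ℝ → ℝ)
    (hderiv : ∀ t ∈ Set.Ioi (0 : ℝ), HasDerivAt H (H' t) t)
    (hderivCont : ContinuousOn H' (Set.Ioi 0))
    (hHconv : StrictConvexOn ℝ (Set.Ioi 0) H)
    (hlim1 : Tendsto H (nhdsWithin 0 (Set.Ioi 0)) atTop)
    (hlim2 : Tendsto (fun t => H t / t) atTop atTop)
    (hHstar : ∀ s : ℝ, IsLUB {y | ∃ t > (0 : ℝ), y = s * t - H t} (Hstar s))
    (l : EuclideanSpace ℝ (Fin d) → ℝ)
    (ul : EuclideanSpace ℝ (Fin d)) (hul : ul ∈ closure Λ)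
    (hmin : ∀ u ∈ closure Λ, l ul ≤ l u)
    (sl : ℝ) (hsl : sl = -l ul)
    (k : EuclideanSpace ℝ (Fin d) → ℝ)
    (hk : ∀ v, IsLUB
      {y | ∃ u ∈ closure Λ, ∃ t > (0 : ℝ), y = ⟪u, v⟫ - t * l u - H t} (k v))
    (hkint : IntegrableOn (fun x => k (F x + Divφ x)) Ω volume) :
    (volume Ω).toReal * Hstar sl - rstar * ∫ x in Ω, ‖F x‖
      ≤ ∫ x in Ω, k (F x + Divφ x) :=
  statement_18_general Ω Λ hΩb rstar hr F Divφ hF hDivφ hdiv0 H Hstar hHstar l ul hul sl hsl k hk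
    hkint
end
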